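/- arXiv:1610.08370 — 2 statements merged into one kernel-verified Lean document; each statement's English description precedes it below -/
import Mathlib

section
/- Let G be a connected threshold graph on vertex set {0,1,…,n} (n≥1) labeled by reverse degree sequence, and let a=(a_1,…,a_n) be positive integers. Then Ehr_{q,1}(F_G(a)) = Σ_{T increasing} ∏_{i=1}^n [δ_T^a(i)]_q, where the sum ranges over all increasing spanning trees T of G. -/
open Finset Polynomial

namespace ThresholdFlow

/-- A threshold graph on `{0,…,n}` labeled by reverse degree sequence: whenever `i > j` are
adjacent and `i' ≤ i`, `j' ≤ j`, `i' ≠ j'`, then `i'` and `j'` are adjacent. -/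
def IsThreshold (n : ℕ) (G : SimpleGraph (Fin (n+1))) : Prop :=
  ∀ i j i' j' : Fin (n+1), j < i → G.Adj i j → i' ≤ i → j' ≤ j → i' ≠ j' → G.Adj i' j'

/-- An integer `a`-flow on `G`: nonnegative integers on the edges of `G` (oriented from the
larger endpoint `i` to the smaller endpoint `j`, recorded as `f i j`), with net flow `a i`
at every vertex `i ≠ 0`. -/
def IsFlow (n : ℕ) (G : SimpleGraph (Fin (n+1))) (a : Fin (n+1) → ℕ)
    (f : Fin (n+1) → Fin (n+1) → ℕ) : Prop :=
  (∀ i j, f i j ≠ 0 → j < i ∧ G.Adj i j) ∧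
  (∀ i : Fin (n+1), i ≠ 0 → ∑ j, f i j = a i + ∑ j, f j i)

/-- The number of positive entries of a flow. -/
def posCount (n : ℕ) (f : Fin (n+1) → Fin (n+1) → ℕ) : ℕ :=
  (Finset.univ.filter fun pr : Fin (n+1) × Fin (n+1) => 0 < f pr.1 pr.2).card

/-- `[b]_q = 1 + q + ⋯ + q^(b-1)` as a polynomial in `ℤ[q]`. -/
noncomputable def qnat (b : ℕ) : Polynomial ℤ := ∑ k ∈ Finset.range b, X ^ k

/-- `Ehr_{q,1}(F_G(a))`: the sum over integer `a`-flows with exactly `n` positive entries of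
`∏_{e : f(e) > 0} [f(e)]_q`. -/
noncomputable def Ehr1 (n : ℕ) (G : SimpleGraph (Fin (n+1))) (a : Fin (n+1) → ℕ) :
    Polynomial ℤ :=
  ∑ᶠ f ∈ {f | IsFlow n G a f ∧ posCount n f = n},
    ∏ i, ∏ j, if 0 < f i j then qnat (f i j) else 1

/-- `Ehr_{q,0}(F_G(a))`: the sum over all integer `a`-flows of
`(q-1)^(s(f)-n) ∏_{e : f(e) > 0} q^(f(e)-1)`. -/
noncomputable def Ehr0 (n : ℕ) (G : SimpleGraph (Fin (n+1))) (a : Fin (n+1) → ℕ) :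
    Polynomial ℤ :=
  ∑ᶠ f ∈ {f | IsFlow n G a f},
    (X - 1) ^ (posCount n f - n) * ∏ i, ∏ j, if 0 < f i j then X ^ (f i j - 1) else 1

/-- `Ehr_{1,1}(F_G(a))`: the sum over integer `a`-flows with exactly `n` positive entries of
the product of the positive entries. -/
noncomputable def Ehr11 (n : ℕ) (G : SimpleGraph (Fin (n+1))) (a : Fin (n+1) → ℕ) : ℕ :=
  ∑ᶠ f ∈ {f | IsFlow n G a f ∧ posCount n f = n},
    ∏ i, ∏ j, if 0 < f i j then f i j else 1

/-- A spanning tree of `G` rooted at `0`, encoded by its parent function `p`: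
`p 0 = 0`, each `i ≠ 0` is adjacent in `G` to its parent `p i`, and iterating the parent
function from any vertex reaches the root `0`. -/
def IsSpanTree (n : ℕ) (G : SimpleGraph (Fin (n+1))) (p : Fin (n+1) → Fin (n+1)) : Prop :=
  p 0 = 0 ∧ (∀ i, i ≠ 0 → G.Adj i (p i)) ∧ ∀ i, ∃ k, p^[k] i = 0

/-- `j` is a descendant of `i` in the rooted tree with parent function `p`
(in particular every vertex is a descendant of itself). -/
def Desc (n : ℕ) (p : Fin (n+1) → Fin (n+1)) (i j : Fin (n+1)) : Prop :=
  ∃ k, p^[k] j = i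

/-- The set of inversions of the rooted tree `p`: pairs `(i,j)` with `i > j`, `i ≠ 0` and
`j` a descendant of `i`. -/
def invSet (n : ℕ) (p : Fin (n+1) → Fin (n+1)) : Set (Fin (n+1) × Fin (n+1)) :=
  {pr | pr.2 < pr.1 ∧ pr.1 ≠ 0 ∧ Desc n p pr.1 pr.2}

/-- The number of inversions of the rooted tree `p`. -/
noncomputable def treeInv (n : ℕ) (p : Fin (n+1) → Fin (n+1)) : ℕ := (invSet n p).ncard

/-- A rooted spanning tree is increasing if it has no inversions. -/
def IsIncr (n : ℕ) (p : Fin (n+1) → Fin (n+1)) : Prop := invSet n p = ∅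

/-- `δ_T(i)`: the number of descendants of `i` (including `i` itself). -/
noncomputable def delta (n : ℕ) (p : Fin (n+1) → Fin (n+1)) (i : Fin (n+1)) : ℕ :=
  Set.ncard {j | Desc n p i j}

/-- `δ_T^a(i) = Σ_j a_j`, summed over the descendants `j` of `i` (including `i` itself). -/
noncomputable def deltaA (n : ℕ) (a : Fin (n+1) → ℕ) (p : Fin (n+1) → Fin (n+1))
    (i : Fin (n+1)) : ℕ :=
  ∑ᶠ j ∈ {j | Desc n p i j}, a j

/-- The degree `d_i` of vertex `i` in `G`. -/
noncomputable def deg (n : ℕ) (G : SimpleGraph (Fin (n+1))) (i : Fin (n+1)) : ℕ :=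
  Set.ncard {j | G.Adj i j}

/-- `d̄_i`: the number of neighbors of `i` smaller than `i`. -/
noncomputable def dbar (n : ℕ) (G : SimpleGraph (Fin (n+1))) (i : Fin (n+1)) : ℕ :=
  Set.ncard {j | j < i ∧ G.Adj i j}

/-- A `G`-parking function, encoded as `P : Fin (n+1) → ℕ` with `P 0 = 0`. -/
def IsParking (n : ℕ) (G : SimpleGraph (Fin (n+1))) (P : Fin (n+1) → ℕ) : Prop :=
  P 0 = 0 ∧ ∀ S : Finset (Fin (n+1)), S.Nonempty → (0 : Fin (n+1)) ∉ S →
    ∃ i ∈ S, P i < Set.ncard {j | j ∉ S ∧ G.Adj i j}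

/-- `codeg(P) = (|E(G)| - n) - Σ_{i=1}^n P(i)`. -/
noncomputable def codeg (n : ℕ) (G : SimpleGraph (Fin (n+1))) (P : Fin (n+1) → ℕ) : ℕ :=
  (Set.ncard G.edgeSet - n) - ∑ i, P i

/-- `[m]_q` as a Laurent polynomial. -/
noncomputable def lq (m : ℕ) : LaurentPolynomial ℤ :=
  ∑ k ∈ Finset.range m, LaurentPolynomial.T (k : ℤ)

/-- `[b]_{q^m} = 1 + q^m + ⋯ + q^{m(b-1)}` as a Laurent polynomial. -/
noncomputable def lqpow (m b : ℕ) : LaurentPolynomial ℤ :=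
  ∑ k ∈ Finset.range b, LaurentPolynomial.T ((m : ℤ) * k)

/-- `wt_{q,q⁻¹}(b)`: the substitution `t = q⁻¹` in `wt_{q,t}(b) = Σ_{k=0}^{b-1} q^k t^{b-1-k}`,
with `wt_{q,q⁻¹}(0) = 1`. -/
noncomputable def wtqq (b : ℕ) : LaurentPolynomial ℤ :=
  if b = 0 then 1 else ∑ k ∈ Finset.range b, LaurentPolynomial.T (2 * (k : ℤ) - ((b : ℤ) - 1))

/-- `Ehr_{q,q⁻¹}(F_G(a))`: the sum over all integer `a`-flows `f` of
`(-(1-q)(1-q⁻¹))^(s(f)-n) ∏_e wt_{q,q⁻¹}(f(e))`, as a Laurent polynomial in `q`. -/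
noncomputable def Ehrqq (n : ℕ) (G : SimpleGraph (Fin (n+1))) (a : Fin (n+1) → ℕ) :
    LaurentPolynomial ℤ :=
  ∑ᶠ f ∈ {f | IsFlow n G a f},
    (-((1 - LaurentPolynomial.T 1) * (1 - LaurentPolynomial.T (-1)))) ^ (posCount n f - n) *
      ∏ i, ∏ j, wtqq (f i j)

end ThresholdFlow

namespace ThresholdFlow

section Bij
variable {n : ℕ} {p : Fin (n+1) → Fin (n+1)} {a : Fin (n+1) → ℕ} {G : SimpleGraph (Fin (n+1))}

lemma ple (hp0 : p 0 = 0) (hlt : ∀ i, i ≠ 0 → p i < i) (x : Fin (n+1)) : p x ≤ x := by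
  by_cases hx : x = 0
  · subst hx; simp [hp0]
  · exact (hlt x hx).le

lemma iter_le (hp0 : p 0 = 0) (hlt : ∀ i, i ≠ 0 → p i < i) :
    ∀ (k : ℕ) (x : Fin (n+1)), p^[k] x ≤ x := by
  intro k
  induction k with
  | zero => simp
  | succ k ih =>
      intro x
      rw [Function.iterate_succ_apply]
      exact le_trans (ih (p x)) (ple hp0 hlt x)

lemma desc_le (hp0 : p 0 = 0) (hlt : ∀ i, i ≠ 0 → p i < i) {i j : Fin (n+1)}
    (h : Desc n p i j) : i ≤ j := by
  obtain ⟨k, hk⟩ := h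
  exact hk ▸ iter_le hp0 hlt k j

lemma desc_total {c c' j : Fin (n+1)} (h : Desc n p c j) (h' : Desc n p c' j) :
    Desc n p c c' ∨ Desc n p c' c := by
  obtain ⟨k, hk⟩ := h; obtain ⟨k', hk'⟩ := h'
  rcases le_total k k' with hle | hle
  · right
    refine ⟨k' - k, ?_⟩
    rw [← hk, ← Function.iterate_add_apply, Nat.sub_add_cancel hle, hk']
  · left
    refine ⟨k - k', ?_⟩
    rw [← hk', ← Function.iterate_add_apply, Nat.sub_add_cancel hle, hk]

lemma child_disj_aux (hp0 : p 0 = 0) (hlt : ∀ i, i ≠ 0 → p i < i)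
    {i c c' : Fin (n+1)} (hc : c ≠ 0) (hpc : p c = i) (hpc' : p c' = i) (hne : c ≠ c')
    (m : ℕ) (hm : p^[m] c' = c) : False := by
  cases m with
  | zero =>
      simp only [Function.iterate_zero_apply] at hm
      exact hne hm.symm
  | succ m =>
      rw [Function.iterate_succ_apply, hpc'] at hm
      have hci : c ≤ i := hm ▸ iter_le hp0 hlt m i
      have : p c < c := hlt c hc
      rw [hpc] at this
      exact absurd (lt_of_lt_of_le this hci) (lt_irrefl i)

lemma child_disj (hp0 : p 0 = 0) (hlt : ∀ i, i ≠ 0 → p i < i)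
    {i c c' j : Fin (n+1)} (hc : c ≠ 0) (hc' : c' ≠ 0)
    (hpc : p c = i) (hpc' : p c' = i) (hne : c ≠ c')
    (hj : Desc n p c j) (hj' : Desc n p c' j) : False := by
  rcases desc_total hj hj' with ⟨m, hm⟩ | ⟨m, hm⟩
  · exact child_disj_aux hp0 hlt hc hpc hpc' hne m hm
  · exact child_disj_aux hp0 hlt hc' hpc' hpc hne.symm m hm

noncomputable def Dfin (n : ℕ) (p : Fin (n+1) → Fin (n+1)) (i : Fin (n+1)) :
    Finset (Fin (n+1)) := (Set.toFinite {j | Desc n p i j}).toFinset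

def Cfin (n : ℕ) (p : Fin (n+1) → Fin (n+1)) (i : Fin (n+1)) : Finset (Fin (n+1)) :=
  univ.filter (fun c => c ≠ 0 ∧ p c = i)

lemma mem_Dfin {i j : Fin (n+1)} : j ∈ Dfin n p i ↔ Desc n p i j := by
  simp [Dfin]

lemma mem_Cfin {i c : Fin (n+1)} : c ∈ Cfin n p i ↔ c ≠ 0 ∧ p c = i := by
  simp [Cfin]

lemma deltaA_eq (a : Fin (n+1) → ℕ) (i : Fin (n+1)) :
    deltaA n a p i = ∑ j ∈ Dfin n p i, a j := by
  rw [deltaA, ← (Set.toFinite {j | Desc n p i j}).coe_toFinset, finsum_mem_coe_finset]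
  rfl

lemma Dfin_eq (hp0 : p 0 = 0) (i : Fin (n+1)) (hi : i ≠ 0) :
    Dfin n p i = insert i ((Cfin n p i).biUnion (Dfin n p)) := by
  ext j
  simp only [mem_Dfin, Finset.mem_insert, Finset.mem_biUnion, mem_Cfin]
  constructor
  · rintro ⟨k, hk⟩
    cases k with
    | zero => left; simpa using hk
    | succ k =>
        right
        rw [Function.iterate_succ_apply'] at hk
        refine ⟨p^[k] j, ⟨?_, hk⟩, ⟨k, rfl⟩⟩
        intro h0
        rw [h0, hp0] at hk
        exact hi hk.symm
  · rintro (rfl | ⟨c, ⟨hc0, hpc⟩, hcj⟩)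
    · exact ⟨0, rfl⟩
    · obtain ⟨k, hk⟩ := hcj
      exact ⟨k + 1, by rw [Function.iterate_succ_apply', hk, hpc]⟩

lemma delta_rec (hp0 : p 0 = 0) (hlt : ∀ i, i ≠ 0 → p i < i) (a : Fin (n+1) → ℕ)
    (i : Fin (n+1)) (hi : i ≠ 0) :
    deltaA n a p i = a i + ∑ c ∈ Cfin n p i, deltaA n a p c := by
  have hnot : i ∉ (Cfin n p i).biUnion (Dfin n p) := by
    simp only [Finset.mem_biUnion, mem_Cfin, mem_Dfin, not_exists]
    rintro c ⟨⟨hc0, hpc⟩, hdesc⟩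
    have h1 : c ≤ i := desc_le hp0 hlt hdesc
    have h2 : p c < c := hlt c hc0
    rw [hpc] at h2
    exact absurd (lt_of_lt_of_le h2 h1) (lt_irrefl i)
  have hdisj : (↑(Cfin n p i) : Set (Fin (n+1))).PairwiseDisjoint (Dfin n p) := by
    intro c hc c' hc' hne
    simp only [Finset.mem_coe, mem_Cfin] at hc hc'
    simp only [Function.onFun]
    rw [Finset.disjoint_left]
    intro j hj hj'
    exact child_disj hp0 hlt hc.1 hc'.1 hc.2 hc'.2 hne (mem_Dfin.mp hj) (mem_Dfin.mp hj')
  rw [deltaA_eq, Dfin_eq hp0 i hi, Finset.sum_insert hnot, Finset.sum_biUnion hdisj]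
  congr 1
  exact Finset.sum_congr rfl fun c _ => (deltaA_eq a c).symm

lemma deltaA_pos (hp0 : p 0 = 0) (ha : ∀ i : Fin (n+1), i ≠ 0 → 0 < a i)
    (i : Fin (n+1)) (hi : i ≠ 0) : 0 < deltaA n a p i := by
  rw [deltaA_eq]
  exact lt_of_lt_of_le (ha i hi)
    (Finset.single_le_sum (fun _ _ => Nat.zero_le _) (mem_Dfin.mpr ⟨0, rfl⟩))

-- flow associated to an increasing tree
noncomputable def flOf (n : ℕ) (a : Fin (n+1) → ℕ) (p : Fin (n+1) → Fin (n+1)) :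
    Fin (n+1) → Fin (n+1) → ℕ :=
  fun i j => if i = 0 then 0 else if j = p i then deltaA n a p i else 0

lemma flOf_ne {i j : Fin (n+1)} (h : flOf n a p i j ≠ 0) : i ≠ 0 ∧ j = p i := by
  by_cases hi : i = 0
  · simp [flOf, hi] at h
  · by_cases hj : j = p i
    · exact ⟨hi, hj⟩
    · simp [flOf, hi, hj] at h

lemma flOf_self {i : Fin (n+1)} (hi : i ≠ 0) : flOf n a p i (p i) = deltaA n a p i := by
  simp [flOf, hi]

lemma sum_out {i : Fin (n+1)} (hi : i ≠ 0) : ∑ j, flOf n a p i j = deltaA n a p i := by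
  simp [flOf, hi, Finset.sum_ite_eq']

lemma sum_in (i : Fin (n+1)) :
    ∑ j, flOf n a p j i = ∑ c ∈ Cfin n p i, deltaA n a p c := by
  rw [Cfin, Finset.sum_filter]
  refine Finset.sum_congr rfl fun j _ => ?_
  by_cases hj : j = 0
  · simp [flOf, hj]
  · by_cases hpj : p j = i
    · simp [flOf, hj, hpj]
    · have h2 : i ≠ p j := fun h => hpj h.symm
      simp [flOf, hj, hpj, h2]

lemma flOf_isFlow (hp0 : p 0 = 0) (hlt : ∀ i, i ≠ 0 → p i < i)
    (hadj : ∀ i, i ≠ 0 → G.Adj i (p i)) : IsFlow n G a (flOf n a p) := by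
  constructor
  · intro i j h
    obtain ⟨hi, hj⟩ := flOf_ne h
    subst hj
    exact ⟨hlt i hi, hadj i hi⟩
  · intro i hi
    rw [sum_out hi, sum_in, delta_rec hp0 hlt a i hi]

lemma flOf_posCount (hp0 : p 0 = 0) (ha : ∀ i : Fin (n+1), i ≠ 0 → 0 < a i) :
    posCount n (flOf n a p) = n := by
  have hset : (univ.filter fun pr : Fin (n+1) × Fin (n+1) => 0 < flOf n a p pr.1 pr.2)
      = (univ.erase 0).image (fun i => (i, p i)) := by
    ext pr
    simp only [Finset.mem_filter, Finset.mem_univ, true_and, Finset.mem_image,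
      Finset.mem_erase]
    constructor
    · intro h
      obtain ⟨hi, hj⟩ := flOf_ne (Nat.pos_iff_ne_zero.mp h)
      exact ⟨pr.1, ⟨hi, trivial⟩, Prod.ext rfl hj.symm⟩
    · rintro ⟨i, ⟨hi, -⟩, rfl⟩
      rw [flOf_self hi]
      exact deltaA_pos hp0 ha i hi
  rw [posCount, hset, Finset.card_image_of_injOn
    (fun x _ y _ h => congrArg Prod.fst h)]
  rw [Finset.card_erase_of_mem (Finset.mem_univ _), Finset.card_univ, Fintype.card_fin]
  omega

lemma flOf_prod (hp0 : p 0 = 0) (ha : ∀ i : Fin (n+1), i ≠ 0 → 0 < a i) :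
    (∏ i, ∏ j, if 0 < flOf n a p i j then qnat (flOf n a p i j) else 1)
      = ∏ i ∈ univ.erase (0 : Fin (n+1)), qnat (deltaA n a p i) := by
  have h1 : ∀ i : Fin (n+1),
      (∏ j, if 0 < flOf n a p i j then qnat (flOf n a p i j) else 1)
        = if i = 0 then 1 else qnat (deltaA n a p i) := by
    intro i
    by_cases hi : i = 0
    · simp [flOf, hi]
    · rw [if_neg hi]
      rw [Finset.prod_eq_single (p i)]
      · rw [flOf_self hi, if_pos (deltaA_pos hp0 ha i hi)]
      · intro j _ hj
        simp [flOf, hi, hj]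
      · intro h; exact absurd (Finset.mem_univ _) h
  rw [Finset.prod_congr rfl fun i _ => h1 i]
  rw [← Finset.mul_prod_erase univ _ (Finset.mem_univ (0 : Fin (n+1)))]
  rw [if_pos rfl, one_mul]
  exact Finset.prod_congr rfl fun i hi => if_neg (Finset.ne_of_mem_erase hi)

lemma tree_lt (hT : IsSpanTree n G p) (hI : IsIncr n p) (i : Fin (n+1)) (hi : i ≠ 0) :
    p i < i := by
  obtain ⟨hp0, hadj, hreach⟩ := hT
  rcases lt_trichotomy (p i) i with h | h | h
  · exact h
  · exfalso
    obtain ⟨k, hk⟩ := hreach i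
    have hfix : ∀ m, p^[m] i = i := by
      intro m
      induction m with
      | zero => rfl
      | succ m ih => rw [Function.iterate_succ_apply', ih, h]
    exact hi (by rw [← hk, hfix k])
  · exfalso
    have hne : p i ≠ 0 := by
      intro h0; rw [h0] at h
      exact absurd h (by simp)
    have hmem : ((p i, i) : Fin (n+1) × Fin (n+1)) ∈ invSet n p :=
      ⟨h, hne, ⟨1, by simp⟩⟩
    rw [hI] at hmem
    exact hmem

lemma iter_val (hp0 : p 0 = 0) (hlt : ∀ i, i ≠ 0 → p i < i) :
    ∀ (m : ℕ) (i : Fin (n+1)), i.val ≤ m → p^[m] i = 0 := by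
  intro m
  induction m with
  | zero =>
      intro i hi
      have : i = 0 := by
        apply Fin.ext; simpa using hi
      simpa [this]
  | succ m ih =>
      intro i hi
      by_cases h0 : i = 0
      · rw [Function.iterate_succ_apply, h0, hp0]
        exact ih 0 (Nat.zero_le _)
      · rw [Function.iterate_succ_apply]
        refine ih (p i) ?_
        have := hlt i h0
        rw [Fin.lt_iff_val_lt_val] at this
        omega

lemma flOf_surj (hf : IsFlow n G a f ∧ posCount n f = n)
    (ha : ∀ i : Fin (n+1), i ≠ 0 → 0 < a i) :
    ∃ q : Fin (n+1) → Fin (n+1), (IsSpanTree n G q ∧ IsIncr n q) ∧ flOf n a q = f := by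
  classical
  obtain ⟨⟨hsupp, hbal⟩, hcard⟩ := hf
  -- existence of a positive out-edge for each i ≠ 0
  have hex : ∀ i : Fin (n+1), i ≠ 0 → ∃ j, 0 < f i j := by
    intro i hi
    have h1 : ∑ j, f i j = a i + ∑ j, f j i := hbal i hi
    have h2 : ∑ j, f i j ≠ 0 := by
      have := ha i hi; omega
    obtain ⟨j, -, hj⟩ := Finset.exists_ne_zero_of_sum_ne_zero h2
    exact ⟨j, Nat.pos_of_ne_zero hj⟩
  choose g hg using hex
  set Pos := (Finset.univ.filter fun pr : Fin (n+1) × Fin (n+1) => 0 < f pr.1 pr.2) with hPos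
  -- injectivity of first projection on Pos
  have hsub : Finset.univ.erase (0 : Fin (n+1)) ⊆ Pos.image Prod.fst := by
    intro i hi
    have hi0 : i ≠ 0 := Finset.ne_of_mem_erase hi
    exact Finset.mem_image.mpr ⟨(i, g i hi0), Finset.mem_filter.mpr ⟨Finset.mem_univ _, hg i hi0⟩, rfl⟩
  have hcard2 : (Pos.image Prod.fst).card = Pos.card := by
    have h1 : (Pos.image Prod.fst).card ≤ Pos.card := Finset.card_image_le
    have h2 : (Finset.univ.erase (0 : Fin (n+1))).card ≤ (Pos.image Prod.fst).card :=
      Finset.card_le_card hsub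
    have h3 : (Finset.univ.erase (0 : Fin (n+1))).card = n := by
      rw [Finset.card_erase_of_mem (Finset.mem_univ _), Finset.card_univ, Fintype.card_fin]
      omega
    rw [posCount, ← hPos] at hcard
    omega
  have hinj : Set.InjOn Prod.fst (↑Pos : Set (Fin (n+1) × Fin (n+1))) := Finset.card_image_iff.mp hcard2
  have huniq : ∀ i j j' : Fin (n+1), 0 < f i j → 0 < f i j' → j = j' := by
    intro i j j' h1 h2
    have hm1 : ((i, j) : Fin (n+1) × Fin (n+1)) ∈ (↑Pos : Set _) := by
      simp [hPos, h1]
    have hm2 : ((i, j') : Fin (n+1) × Fin (n+1)) ∈ (↑Pos : Set _) := by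
      simp [hPos, h2]
    exact congrArg Prod.snd (hinj hm1 hm2 rfl)
  set q : Fin (n+1) → Fin (n+1) := fun i => if h : i = 0 then 0 else g i h with hq
  have hq0 : q 0 = 0 := by simp [hq]
  have hqpos : ∀ i : Fin (n+1), i ≠ 0 → 0 < f i (q i) := by
    intro i hi; simp only [hq, dif_neg hi]; exact hg i hi
  have hlt : ∀ i, i ≠ 0 → q i < i := fun i hi => (hsupp i (q i) (hqpos i hi).ne').1
  have hadj : ∀ i, i ≠ 0 → G.Adj i (q i) := fun i hi => (hsupp i (q i) (hqpos i hi).ne').2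
  have huniq' : ∀ i j : Fin (n+1), 0 < f i j → j = q i := by
    intro i j hpos
    have hi : i ≠ 0 := by
      intro h0; subst h0
      exact absurd (hsupp 0 j hpos.ne').1 (by simp)
    exact huniq i j (q i) hpos (hqpos i hi)
  have hincr : IsIncr n q := by
    rw [IsIncr, Set.eq_empty_iff_forall_notMem]
    rintro pr ⟨h1, h2, h3⟩
    exact absurd h1 (not_lt.mpr (desc_le hq0 hlt h3))
  -- the key downward induction
  have key : ∀ k : ℕ, ∀ i : Fin (n+1), n - i.val < k → i ≠ 0 → f i (q i) = deltaA n a q i := by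
    intro k
    induction k with
    | zero => intro i h; exact absurd h (Nat.not_lt_zero _)
    | succ k ih =>
        intro i hik hi
        have h1 : ∑ j, f i j = f i (q i) := by
          refine Finset.sum_eq_single (q i) (fun j _ hj => ?_) (fun h => absurd (Finset.mem_univ _) h)
          by_contra hne
          exact hj (huniq' i j (Nat.pos_of_ne_zero hne))
        have h2 : ∑ j, f j i = ∑ c ∈ Cfin n q i, f c (q c) := by
          have hcond : ∀ x ∈ Finset.univ, f x i ≠ 0 → (x ≠ 0 ∧ q x = i) := by
            intro x _ hx
            have hpos := Nat.pos_of_ne_zero hx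
            have hix : i < x := (hsupp x i hx).1
            constructor
            · intro h0; rw [h0] at hix; exact absurd hix (by simp)
            · exact (huniq' x i hpos).symm
          rw [Cfin, ← Finset.sum_filter_of_ne hcond]
          refine Finset.sum_congr rfl fun c hc => ?_
          rw [(Finset.mem_filter.mp hc).2.2]
        have h3 : ∀ c ∈ Cfin n q i, f c (q c) = deltaA n a q c := by
          intro c hc
          obtain ⟨hc0, hqc⟩ := mem_Cfin.mp hc
          have hic : i < c := by rw [← hqc]; exact hlt c hc0
          refine ih c ?_ hc0
          have hcn : c.val ≤ n := Nat.lt_succ_iff.mp c.isLt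
          have : i.val < c.val := hic
          omega
        have hb := hbal i hi
        rw [h1, h2, Finset.sum_congr rfl h3] at hb
        rw [hb, ← delta_rec hq0 hlt a i hi]
  refine ⟨q, ⟨⟨hq0, hadj, fun i => ⟨i.val, iter_val hq0 hlt i.val i le_rfl⟩⟩, hincr⟩, ?_⟩
  funext i j
  by_cases hi : i = 0
  · subst hi
    simp only [flOf, if_pos rfl]
    by_contra h
    exact absurd (hsupp 0 j (Ne.symm h)).1 (by simp)
  · by_cases hj : j = q i
    · subst hj
      simp only [flOf, if_neg hi, if_pos rfl]
      exact (key (n + 1) i (by omega) hi).symm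
    · simp only [flOf, if_neg hi, if_neg hj]
      by_contra h
      exact hj (huniq' i j (Nat.pos_of_ne_zero (Ne.symm h)))

lemma flOf_inj {n : ℕ} {a : Fin (n+1) → ℕ} {G : SimpleGraph (Fin (n+1))}
    (ha : ∀ i : Fin (n+1), i ≠ 0 → 0 < a i) :
    Set.InjOn (flOf n a) {p | IsSpanTree n G p ∧ IsIncr n p} := by
  intro p hp p' hp' h
  have hp0 : p 0 = 0 := hp.1.1
  have hp0' : p' 0 = 0 := hp'.1.1
  funext i
  by_cases hi : i = 0
  · rw [hi, hp0, hp0']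
  · have hpos : flOf n a p i (p i) ≠ 0 := by
      rw [flOf_self hi]
      exact (deltaA_pos hp0 ha i hi).ne'
    rw [h] at hpos
    exact (flOf_ne hpos).2

end Bij

theorem ehr_q1_eq_sum_increasing_general (n : ℕ) (hn : 1 ≤ n) (G : SimpleGraph (Fin (n+1)))
    (hG : IsThreshold n G) (hc : G.Connected) (a : Fin (n+1) → ℕ)
    (ha : ∀ i : Fin (n+1), i ≠ 0 → 0 < a i) :
    Ehr1 n G a =
      ∑ᶠ p ∈ {p | IsSpanTree n G p ∧ IsIncr n p},
        ∏ i ∈ Finset.univ.erase (0 : Fin (n+1)), qnat (deltaA n a p i) := by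
  classical
  rw [Ehr1]
  refine (finsum_mem_eq_of_bijOn (flOf n a) ⟨?_, ?_, ?_⟩ ?_).symm
  · intro p hp
    obtain ⟨⟨hp0, hadj, hreach⟩, hincr⟩ := hp
    have hlt : ∀ i, i ≠ 0 → p i < i := fun i hi =>
      tree_lt ⟨hp0, hadj, hreach⟩ hincr i hi
    exact ⟨flOf_isFlow hp0 hlt hadj, flOf_posCount hp0 ha⟩
  · exact flOf_inj ha
  · intro f hf
    obtain ⟨q, hq, hfe⟩ := flOf_surj hf ha
    exact ⟨q, hq, hfe⟩
  · intro p hp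
    exact (flOf_prod hp.1.1 ha).symm

end ThresholdFlow
end

section
/- Let G be a threshold graph on vertex set {0,1,…,n} (n≥1) labeled by reverse degree sequence, and let a=(a_1,…,a_n) be positive integers. Then Ehr_{q,0}(F_G(a)) = ∏_{i=1}^n q^{d̄_i(a_i−1)} [d̄_i]_q, where d̄_i = min{d_i, i} is the number of neighbors of vertex i that are smaller than i. -/
open Finset Polynomial

namespace ThresholdFlow
open Finset Polynomial

/-- cons splitting of sums over antidiagonalTuple -/
lemma sum_adT_succ {M : Type*} [AddCommMonoid M] (m a : ℕ) (F : (Fin (m+1) → ℕ) → M) :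
    ∑ x ∈ Finset.Nat.antidiagonalTuple (m+1) a, F x
      = ∑ p ∈ Finset.HasAntidiagonal.antidiagonal a, ∑ y ∈ Finset.Nat.antidiagonalTuple m p.2,
          F (Fin.cons p.1 y) := by
  rw [Finset.sum_sigma']
  refine Finset.sum_bij' (fun x _ => (⟨(x 0, ∑ j : Fin m, x j.succ), fun j : Fin m => x j.succ⟩ :
      (p : ℕ × ℕ) × (Fin m → ℕ)))
    (fun q _ => Fin.cons q.1.1 q.2) ?_ ?_ ?_ ?_ ?_
  · intro x hx
    rw [Finset.Nat.mem_antidiagonalTuple] at hx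
    refine Finset.mem_sigma.mpr ⟨?_, ?_⟩
    · simpa [Finset.mem_antidiagonal, ← hx] using (Fin.sum_univ_succ x).symm
    · simp [Finset.Nat.mem_antidiagonalTuple]
  · intro q hq
    rw [Finset.mem_sigma] at hq
    rw [Finset.Nat.mem_antidiagonalTuple, Fin.sum_univ_succ]
    simp only [Fin.cons_zero, Fin.cons_succ]
    rw [Finset.Nat.mem_antidiagonalTuple.mp hq.2]
    simpa [Finset.mem_antidiagonal] using hq.1
  · intro x hx
    exact Fin.cons_self_tail x
  · intro q hq
    rw [Finset.mem_sigma] at hq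
    refine Sigma.ext ?_ ?_
    · simp only [Fin.cons_zero, Fin.cons_succ]
      have := Finset.Nat.mem_antidiagonalTuple.mp hq.2
      exact Prod.ext rfl this
    · simp [Fin.cons_succ]
  · intro x hx
    simp only []
    exact congrArg F (Fin.cons_self_tail x).symm

end ThresholdFlow

namespace ThresholdFlow
open Finset Polynomial

noncomputable def phi (c m : ℕ) : Polynomial ℤ :=
  if m = 0 then 1 else (X - 1) * X ^ (m - 1 + c * m)

lemma phi_zero (c : ℕ) : phi c 0 = 1 := by simp [phi]

lemma phi_succ_shift (c m : ℕ) : phi (c+1) m = X ^ m * phi c m := by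
  rcases Nat.eq_zero_or_pos m with h | h
  · simp [h, phi]
  · have hm : m ≠ 0 := h.ne'
    simp only [phi, if_neg hm]
    rw [show m - 1 + (c+1) * m = m + (m - 1 + c * m) by rw [Nat.succ_mul]; omega]
    ring

/-- The filtered H-sum. -/
noncomputable def HS (m d a : ℕ) : Polynomial ℤ :=
  ∑ x ∈ (Finset.Nat.antidiagonalTuple m a).filter (fun x => ∀ j : Fin m, x j ≠ 0 → (j : ℕ) < d),
    ∏ j : Fin m, phi (j : ℕ) (x j)

lemma HS_d_zero (m a : ℕ) : HS m 0 a = if a = 0 then 1 else 0 := by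
  unfold HS
  have hset : (Finset.Nat.antidiagonalTuple m a).filter
      (fun x => ∀ j : Fin m, x j ≠ 0 → (j : ℕ) < 0) = if a = 0 then {0} else ∅ := by
    ext x
    simp only [Finset.mem_filter, Finset.Nat.mem_antidiagonalTuple]
    constructor
    · rintro ⟨hsum, hsupp⟩
      have hx0 : x = 0 := by
        funext j
        by_contra h
        exact Nat.not_lt_zero _ (hsupp j h)
      subst hx0
      simp at hsum
      simp [← hsum]
    · intro hx
      split_ifs at hx with ha
      · simp only [Finset.mem_singleton] at hx
        subst hx; subst ha
        simp
      · simp at hx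
  rw [hset]
  split_ifs with ha
  · simp [phi_zero]
  · simp

lemma HS_shift (m e c : ℕ) :
    ∑ x ∈ (Finset.Nat.antidiagonalTuple m c).filter (fun x => ∀ j : Fin m, x j ≠ 0 → (j : ℕ) < e),
      ∏ j : Fin m, phi ((j : ℕ) + 1) (x j) = X ^ c * HS m e c := by
  unfold HS
  rw [Finset.mul_sum]
  apply Finset.sum_congr rfl
  intro x hx
  rw [Finset.mem_filter, Finset.Nat.mem_antidiagonalTuple] at hx
  calc ∏ j : Fin m, phi ((j : ℕ) + 1) (x j) = ∏ j, (X ^ (x j) * phi (j : ℕ) (x j)) := by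
        apply Finset.prod_congr rfl; intro j _; exact phi_succ_shift _ _
    _ = (∏ j, (X:Polynomial ℤ) ^ (x j)) * ∏ j : Fin m, phi (j : ℕ) (x j) := Finset.prod_mul_distrib
    _ = X ^ c * ∏ j : Fin m, phi (j : ℕ) (x j) := by
        rw [Finset.prod_pow_eq_pow_sum]
        rw [hx.1]

end ThresholdFlow

namespace ThresholdFlow
open Finset Polynomial

lemma HS_eq : ∀ m d a : ℕ, d ≤ m →
    HS m d a = if a = 0 then 1 else X ^ (d*a) - X ^ (d*(a-1)) := by
  intro m
  induction m with
  | zero =>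
    intro d a hd
    interval_cases d
    rw [HS_d_zero]
    split_ifs <;> simp
  | succ m ih =>
    intro d a hd
    rcases d with _ | e
    · rw [HS_d_zero]; split_ifs <;> simp
    · -- d = e+1, e ≤ m
      have he : e ≤ m := Nat.lt_succ_iff.mp hd
      unfold HS
      rw [Finset.sum_filter, sum_adT_succ m a
        (fun x => if (∀ j : Fin (m+1), x j ≠ 0 → (j : ℕ) < e+1) then
          ∏ j : Fin (m+1), phi (j : ℕ) (x j) else 0)]
      -- simplify each inner term
      have hterm : ∀ p ∈ Finset.HasAntidiagonal.antidiagonal a,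
          (∑ y ∈ Finset.Nat.antidiagonalTuple m p.2,
            if (∀ j : Fin (m+1), (Fin.cons p.1 y : Fin (m+1) → ℕ) j ≠ 0 → (j : ℕ) < e+1) then
              ∏ j : Fin (m+1), phi (j : ℕ) ((Fin.cons p.1 y : Fin (m+1) → ℕ) j) else 0)
          = phi 0 p.1 * (X ^ p.2 * HS m e p.2) := by
        intro p hp
        rw [← HS_shift]
        rw [Finset.sum_filter]
        rw [Finset.mul_sum]
        apply Finset.sum_congr rfl
        intro y hy
        have hcond : (∀ j : Fin (m+1), (Fin.cons p.1 y : Fin (m+1) → ℕ) j ≠ 0 → (j : ℕ) < e+1)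
            ↔ (∀ j : Fin m, y j ≠ 0 → (j : ℕ) < e) := by
          constructor
          · intro h j hj
            have := h j.succ (by simpa using hj)
            simpa using Nat.lt_of_succ_lt_succ (by simpa using this)
          · intro h j
            refine Fin.cases ?_ ?_ j
            · intro _; simp
            · intro i hi
              simp only [Fin.cons_succ] at hi
              have := h i hi
              simp [Fin.val_succ]
              omega
        rw [if_congr hcond rfl rfl]
        split_ifs with hc
        · rw [Fin.prod_univ_succ]
          simp only [Fin.cons_zero, Fin.cons_succ, Fin.val_zero, Fin.val_succ]
        · ring
      rw [Finset.sum_congr rfl hterm]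
      -- now evaluate the antidiagonal sum
      rw [Finset.Nat.sum_antidiagonal_eq_sum_range_succ_mk]
      simp only
      rcases Nat.eq_zero_or_pos a with ha | ha
      · subst ha
        simp only [Finset.sum_range_succ, Finset.range_zero, Finset.sum_empty, zero_add]
        rw [ih e 0 he]
        simp [phi_zero]
      · obtain ⟨t, rfl⟩ := Nat.exists_eq_succ_of_ne_zero ha.ne'
        have hne : (t+1 : ℕ) ≠ 0 := Nat.succ_ne_zero t
        rw [if_neg hne]
        rw [Finset.sum_range_succ, Finset.sum_range_succ']
        have hF0 : phi 0 0 * ((X:Polynomial ℤ) ^ (t+1-0) * HS m e (t+1-0))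
            = X ^ (t+1) * (X ^ (e*(t+1)) - X ^ (e*t)) := by
          simp only [Nat.sub_zero]
          rw [phi_zero, ih e (t+1) he, if_neg hne]
          simp
        have hFtop : phi 0 (t+1) * ((X:Polynomial ℤ) ^ (t+1-(t+1)) * HS m e (t+1-(t+1)))
            = (X - 1) * X ^ t := by
          rw [Nat.sub_self, ih e 0 he]
          simp only [if_pos rfl, pow_zero, mul_one]
          unfold phi
          rw [if_neg hne]
          simp
        have hmid : ∑ i ∈ Finset.range t,
            phi 0 (i+1) * ((X:Polynomial ℤ) ^ (t+1-(i+1)) * HS m e (t+1-(i+1)))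
            = (X - 1) * X ^ t * (X ^ (e*t) - 1) := by
          rw [← Finset.sum_range_reflect]
          have hcong : ∀ i ∈ Finset.range t,
              phi 0 (t-1-i+1) * ((X:Polynomial ℤ) ^ (t+1-(t-1-i+1)) * HS m e (t+1-(t-1-i+1)))
              = ((X - 1) * X ^ t * X ^ (e*(i+1))) - ((X - 1) * X ^ t * X ^ (e*i)) := by
            intro i hi
            rw [Finset.mem_range] at hi
            obtain ⟨u, hu⟩ : ∃ u, t = u + i + 1 := ⟨t - i - 1, by omega⟩
            subst hu
            have h1 : u + i + 1 - 1 - i + 1 = u + 1 := by omega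
            have h2 : u + i + 1 + 1 - (u + 1) = i + 1 := by omega
            rw [h1, h2, ih e (i+1) he, if_neg (Nat.succ_ne_zero i)]
            unfold phi
            rw [if_neg (Nat.succ_ne_zero u)]
            have h3 : u + 1 - 1 + 0 * (u + 1) = u := by omega
            have h4 : i + 1 - 1 = i := by omega
            rw [h3, h4]
            ring
          rw [Finset.sum_congr rfl hcong, Finset.sum_range_sub
            (fun i => (X - 1) * X ^ t * X ^ (e*i))]
          simp only [Nat.mul_zero, pow_zero]
          ring
        rw [hmid, hF0, hFtop]
        have h5 : t + 1 - 1 = t := by omega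
        rw [h5]
        simp only [Nat.succ_eq_add_one]
        ring

end ThresholdFlow

namespace ThresholdFlow
open Finset Polynomial

lemma X_sub_one_ne_zero : (X - 1 : Polynomial ℤ) ≠ 0 := by
  have := Polynomial.X_sub_C_ne_zero (1 : ℤ)
  simpa using this

lemma Fcore (m d a : ℕ) (hd1 : 1 ≤ d) (hdm : d ≤ m) (ha : 1 ≤ a) :
    ∑ x ∈ (Finset.Nat.antidiagonalTuple m a).filter
        (fun x => ∀ j : Fin m, x j ≠ 0 → (j : ℕ) < d),
      (X - 1) ^ ((Finset.univ.filter fun j => 0 < x j).card - 1) *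
        ∏ j : Fin m, (if 0 < x j then (X : Polynomial ℤ) ^ (x j - 1 + (j : ℕ) * x j) else 1)
      = X ^ (d*(a-1)) * qnat d := by
  apply mul_left_cancel₀ X_sub_one_ne_zero
  have hRHS : (X - 1) * ((X:Polynomial ℤ) ^ (d*(a-1)) * qnat d) = X ^ (d*a) - X ^ (d*(a-1)) := by
    have hq : qnat d * (X - 1 : Polynomial ℤ) = X ^ d - 1 := geom_sum_mul X d
    have hexp : d * (a-1) + d = d * a := by
      obtain ⟨t, rfl⟩ := Nat.exists_eq_succ_of_ne_zero (Nat.one_le_iff_ne_zero.mp ha)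
      simp [Nat.mul_succ]
    calc (X - 1) * ((X:Polynomial ℤ) ^ (d*(a-1)) * qnat d)
        = X ^ (d*(a-1)) * (qnat d * (X - 1)) := by ring
      _ = X ^ (d*(a-1)) * (X ^ d - 1) := by rw [hq]
      _ = X ^ (d*(a-1) + d) - X ^ (d*(a-1)) := by rw [pow_add]; ring
      _ = X ^ (d*a) - X ^ (d*(a-1)) := by rw [hexp]
  have hH : HS m d a = X ^ (d*a) - X ^ (d*(a-1)) := by
    rw [HS_eq m d a hdm, if_neg (Nat.one_le_iff_ne_zero.mp ha)]
  rw [hRHS, ← hH]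
  unfold HS
  rw [Finset.mul_sum]
  apply Finset.sum_congr rfl
  intro x hx
  rw [Finset.mem_filter, Finset.Nat.mem_antidiagonalTuple] at hx
  have hs1 : 1 ≤ (Finset.univ.filter fun j => 0 < x j).card := by
    rw [Nat.one_le_iff_ne_zero, Ne, Finset.card_eq_zero]
    intro hcard
    have hall : ∀ j : Fin m, x j = 0 := by
      intro j
      by_contra h
      have : j ∈ Finset.univ.filter fun j => 0 < x j :=
        Finset.mem_filter.mpr ⟨Finset.mem_univ _, Nat.pos_of_ne_zero h⟩
      rw [hcard] at this
      exact absurd this (Finset.notMem_empty _)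
    have : (0:ℕ) = a := by rw [← hx.1]; exact (Finset.sum_eq_zero fun j _ => hall j).symm
    omega
  calc (X - 1) * ((X - 1) ^ ((Finset.univ.filter fun j => 0 < x j).card - 1) *
        ∏ j : Fin m, (if 0 < x j then (X : Polynomial ℤ) ^ (x j - 1 + (j : ℕ) * x j) else 1))
      = (X - 1) ^ ((Finset.univ.filter fun j => 0 < x j).card) *
        ∏ j : Fin m, (if 0 < x j then (X : Polynomial ℤ) ^ (x j - 1 + (j : ℕ) * x j) else 1) := by
        rw [← mul_assoc, ← pow_succ', Nat.sub_add_cancel hs1]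
    _ = (∏ j : Fin m, (if 0 < x j then (X - 1 : Polynomial ℤ) else 1)) *
        ∏ j : Fin m, (if 0 < x j then (X : Polynomial ℤ) ^ (x j - 1 + (j : ℕ) * x j) else 1) := by
        congr 1
        rw [← Finset.prod_filter, Finset.prod_const]
    _ = ∏ j : Fin m, phi (j : ℕ) (x j) := by
        rw [← Finset.prod_mul_distrib]
        apply Finset.prod_congr rfl
        intro j _
        by_cases h : 0 < x j
        · rw [if_pos h, if_pos h]
          unfold phi
          rw [if_neg h.ne']
        · rw [if_neg h, if_neg h, one_mul]
          have : x j = 0 := by omega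
          rw [this, phi_zero]

end ThresholdFlow

namespace ThresholdFlow
open Finset Polynomial

variable {n : ℕ}


lemma ncard_Iio (j : Fin (n+1)) : Set.ncard {k : Fin (n+1) | k < j} = (j:ℕ) := by
  have : {k : Fin (n+1) | k < j} = ↑(Finset.Iio j) := by ext k; simp
  rw [this, Set.ncard_coe_finset, Fin.card_Iio]

lemma ncard_Iic (j : Fin (n+1)) : Set.ncard {k : Fin (n+1) | k ≤ j} = (j:ℕ) + 1 := by
  have : {k : Fin (n+1) | k ≤ j} = ↑(Finset.Iic j) := by ext k; simp
  rw [this, Set.ncard_coe_finset, Fin.card_Iic]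

lemma dbar_le (G : SimpleGraph (Fin (n+1))) (i : Fin (n+1)) : dbar n G i ≤ (i:ℕ) := by
  rw [← ncard_Iio i]
  exact Set.ncard_le_ncard (fun k hk => hk.1) (Set.toFinite _)

/-- L1: lower neighbors form an initial segment. -/
lemma adj_iff_lt_dbar {G : SimpleGraph (Fin (n+1))} (hG : IsThreshold n G)
    {i j : Fin (n+1)} (hji : j < i) : G.Adj i j ↔ (j:ℕ) < dbar n G i := by
  constructor
  · intro hadj
    have hsub : {k : Fin (n+1) | k ≤ j} ⊆ {k | k < i ∧ G.Adj i k} := by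
      intro k hk
      have hk' : k ≤ j := hk
      refine ⟨lt_of_le_of_lt hk' hji, ?_⟩
      exact hG i j i k hji hadj le_rfl hk' (by intro h; subst h; exact absurd hji (not_lt.mpr hk'))
    have := Set.ncard_le_ncard hsub (Set.toFinite _)
    rw [ncard_Iic] at this
    unfold dbar
    omega
  · intro hlt
    by_contra hadj
    have hsub : {k : Fin (n+1) | k < i ∧ G.Adj i k} ⊆ {k | k < j} := by
      intro k hk
      by_contra hkj
      simp only [Set.mem_setOf_eq, not_lt] at hkj
      exact hadj (hG i k i j hk.1 hk.2 le_rfl hkj (Fin.ne_of_gt hji))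
    have := Set.ncard_le_ncard hsub (Set.toFinite _)
    rw [ncard_Iio] at this
    unfold dbar at hlt
    omega

/-- L2: a lower neighbor of some vertex is adjacent to everything below it. -/
lemma dbar_eq_of_adj {G : SimpleGraph (Fin (n+1))} (hG : IsThreshold n G)
    {i j : Fin (n+1)} (hji : j < i) (hadj : G.Adj i j) : dbar n G j = (j:ℕ) := by
  have hset : {k : Fin (n+1) | k < j ∧ G.Adj j k} = {k | k < j} := by
    ext k
    simp only [Set.mem_setOf_eq, and_iff_left_iff_imp]
    intro hk
    exact hG i j j k hji hadj (le_of_lt hji) (le_of_lt hk) (Fin.ne_of_gt hk)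
  unfold dbar
  rw [hset, ncard_Iio]

end ThresholdFlow

namespace ThresholdFlow
open Finset Polynomial


variable {n : ℕ} {G : SimpleGraph (Fin (n+1))} {a : Fin (n+1) → ℕ}

/-- the number of positive entries in each nonempty "row sum" is at least 1 per nonzero vertex -/
lemma posCount_ge {f : Fin (n+1) → Fin (n+1) → ℕ} (hf : IsFlow n G a f)
    (ha : ∀ i : Fin (n+1), i ≠ 0 → 0 < a i) : n ≤ posCount n f := by
  classical
  have hex : ∀ i : Fin (n+1), i ≠ 0 → ∃ j, 0 < f i j := by
    intro i hi
    by_contra h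
    push_neg at h
    have hz : ∑ j, f i j = 0 := Finset.sum_eq_zero fun j _ => by have := h j; omega
    have := hf.2 i hi
    have := ha i hi
    omega
  have hcard : (Finset.univ.erase (0 : Fin (n+1))).card = n := by
    rw [Finset.card_erase_of_mem (Finset.mem_univ _), Finset.card_univ, Fintype.card_fin]
    omega
  suffices h : (Finset.univ.erase (0 : Fin (n+1))).card ≤ posCount n f by omega
  apply Finset.card_le_card_of_injOn
    (fun i => if h : ∃ j, 0 < f i j then (i, h.choose) else (i, i))
  · intro i hi
    have hi0 : i ≠ 0 := Finset.ne_of_mem_erase hi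
    simp only [dif_pos (hex i hi0)]
    exact Finset.mem_filter.mpr ⟨Finset.mem_univ _, (hex i hi0).choose_spec⟩
  · intro i hi i' hi' heq
    by_cases h1 : ∃ j, 0 < f i j <;> by_cases h2 : ∃ j, 0 < f i' j <;>
      simp only [dif_pos, dif_neg, h1, h2] at heq <;>
      exact congrArg Prod.fst heq

/-- every entry of a flow is bounded by the total supply -/
lemma flow_entry_le {f : Fin (n+1) → Fin (n+1) → ℕ} (hf : IsFlow n G a f)
    (p q : Fin (n+1)) : f p q ≤ ∑ i, a i := by
  classical
  by_cases hpq : f p q = 0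
  · omega
  have hqp : q < p := (hf.1 p q hpq).1
  have hp0 : p ≠ 0 := by
    intro h
    subst h
    exact absurd hqp (by simp [Fin.lt_def])
  set S : Finset (Fin (n+1)) := Finset.univ.filter (fun k => p ≤ k) with hS
  have hmemS : ∀ k, k ∈ S ↔ p ≤ k := by intro k; simp [hS]
  have hkey : ∀ k ∈ S, ∑ j, f k j = a k + ∑ j, f j k := by
    intro k hk
    apply hf.2
    intro h
    subst h
    have := (hmemS 0).mp hk
    exact hp0 (Fin.le_zero_iff.mp this)
  have hzero : ∀ k ∈ S, ∀ j ∈ Sᶜ, f j k = 0 := by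
    intro k hk j hj
    by_contra h
    have hlt : k < j := (hf.1 j k h).1
    rw [Finset.mem_compl, hmemS] at hj
    have hpk : p ≤ k := (hmemS k).mp hk
    exact hj (le_of_lt (lt_of_le_of_lt hpk hlt))
  have hsum : ∑ k ∈ S, ∑ j, f k j = ∑ k ∈ S, a k + ∑ k ∈ S, ∑ j, f j k := by
    rw [← Finset.sum_add_distrib]
    exact Finset.sum_congr rfl hkey
  have hin : ∑ k ∈ S, ∑ j, f j k = ∑ k ∈ S, ∑ j ∈ S, f j k := by
    apply Finset.sum_congr rfl
    intro k hk
    rw [← Finset.sum_add_sum_compl S (fun j => f j k)]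
    have : ∑ j ∈ Sᶜ, f j k = 0 := Finset.sum_eq_zero (fun j hj => hzero k hk j hj)
    omega
  have hout : ∑ k ∈ S, ∑ j, f k j = ∑ k ∈ S, ∑ j ∈ S, f k j + ∑ k ∈ S, ∑ j ∈ Sᶜ, f k j := by
    rw [← Finset.sum_add_distrib]
    apply Finset.sum_congr rfl
    intro k _
    rw [← Finset.sum_add_sum_compl S (fun j => f k j)]
  have hswap : ∑ k ∈ S, ∑ j ∈ S, f j k = ∑ k ∈ S, ∑ j ∈ S, f k j := Finset.sum_comm
  have hcancel : ∑ k ∈ S, ∑ j ∈ Sᶜ, f k j = ∑ k ∈ S, a k := by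
    rw [hout, hin, hswap] at hsum
    omega
  have hpin : p ∈ S := (hmemS p).mpr le_rfl
  have hqin : q ∈ Sᶜ := by
    rw [Finset.mem_compl, hmemS]
    exact not_le.mpr hqp
  calc f p q ≤ ∑ j ∈ Sᶜ, f p j := Finset.single_le_sum (fun j _ => Nat.zero_le _) hqin
    _ ≤ ∑ k ∈ S, ∑ j ∈ Sᶜ, f k j :=
        Finset.single_le_sum (f := fun k => ∑ j ∈ Sᶜ, f k j) (fun k _ => Nat.zero_le _) hpin
    _ = ∑ k ∈ S, a k := hcancel
    _ ≤ ∑ i, a i := Finset.sum_le_sum_of_subset (Finset.subset_univ _)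

lemma flows_finite (n : ℕ) (G : SimpleGraph (Fin (n+1))) (a : Fin (n+1) → ℕ) :
    {f | IsFlow n G a f}.Finite := by
  classical
  apply Set.Finite.subset (Set.finite_Icc (fun (_ _ : Fin (n+1)) => (0:ℕ))
    (fun (_ _ : Fin (n+1)) => ∑ i, a i))
  intro f hf
  constructor
  · intro i; intro j; exact Nat.zero_le _
  · intro i; intro j; exact flow_entry_le hf i j

end ThresholdFlow


namespace ThresholdFlow
open Finset Polynomial

/-- Combination of a top-row `x` and a flow `g` on the lower part. -/
def combine (n : ℕ) (x : Fin (n+1) → ℕ) (g : Fin (n+1) → Fin (n+1) → ℕ)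
    (i j : Fin (n+2)) : ℕ :=
  if hj : j = Fin.last (n+1) then 0
  else if hi : i = Fin.last (n+1) then x (j.castPred hj)
  else g (i.castPred hi) (j.castPred hj)

variable {n : ℕ}

lemma castSucc_ne_last (i : Fin (n+1)) : (i.castSucc : Fin (n+2)) ≠ Fin.last (n+1) :=
  (Fin.castSucc_lt_last i).ne

lemma combine_right_last (x : Fin (n+1) → ℕ) (g : Fin (n+1) → Fin (n+1) → ℕ)
    (i : Fin (n+2)) : combine n x g i (Fin.last (n+1)) = 0 := by
  unfold combine
  rw [dif_pos rfl]

lemma combine_castSucc (x : Fin (n+1) → ℕ) (g : Fin (n+1) → Fin (n+1) → ℕ)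
    (i j : Fin (n+1)) : combine n x g i.castSucc j.castSucc = g i j := by
  unfold combine
  rw [dif_neg (castSucc_ne_last j), dif_neg (castSucc_ne_last i)]
  simp [Fin.castPred_castSucc]

lemma combine_last_castSucc (x : Fin (n+1) → ℕ) (g : Fin (n+1) → Fin (n+1) → ℕ)
    (j : Fin (n+1)) : combine n x g (Fin.last (n+1)) j.castSucc = x j := by
  unfold combine
  rw [dif_neg (castSucc_ne_last j), dif_pos rfl]
  simp [Fin.castPred_castSucc]

lemma posCount_combine (x : Fin (n+1) → ℕ) (g : Fin (n+1) → Fin (n+1) → ℕ) :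
    posCount (n+1) (combine n x g)
      = (Finset.univ.filter fun j : Fin (n+1) => 0 < x j).card + posCount n g := by
  classical
  have hc : ∀ (m : ℕ) (f : Fin (m+1) → Fin (m+1) → ℕ),
      posCount m f = ∑ i : Fin (m+1), ∑ j : Fin (m+1), (if 0 < f i j then 1 else 0) := by
    intro m f
    rw [posCount, Finset.card_filter]
    rw [Fintype.sum_prod_type]
  have hx : (Finset.univ.filter fun j : Fin (n+1) => 0 < x j).card
      = ∑ j : Fin (n+1), (if 0 < x j then 1 else 0) := Finset.card_filter _ _
  rw [hc, hc, hx]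
  rw [Fin.sum_univ_castSucc (f := fun i => ∑ j : Fin (n+2),
    (if 0 < combine n x g i j then 1 else 0))]
  have hrow : ∀ i : Fin (n+1), ∑ j : Fin (n+2), (if 0 < combine n x g i.castSucc j then 1 else 0)
      = ∑ j : Fin (n+1), (if 0 < g i j then 1 else 0) := by
    intro i
    rw [Fin.sum_univ_castSucc (f := fun j => if 0 < combine n x g i.castSucc j then 1 else 0)]
    simp only [combine_castSucc, combine_right_last]
    simp
  have hlast : ∑ j : Fin (n+2), (if 0 < combine n x g (Fin.last (n+1)) j then 1 else 0)
      = ∑ j : Fin (n+1), (if 0 < x j then 1 else 0) := by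
    rw [Fin.sum_univ_castSucc (f := fun j => if 0 < combine n x g (Fin.last (n+1)) j then 1 else 0)]
    simp only [combine_last_castSucc, combine_right_last]
    simp
  rw [Finset.sum_congr rfl (fun i _ => hrow i), hlast]
  omega

lemma prodW_combine (x : Fin (n+1) → ℕ) (g : Fin (n+1) → Fin (n+1) → ℕ) :
    (∏ i, ∏ j, if 0 < combine n x g i j then (X:Polynomial ℤ) ^ (combine n x g i j - 1) else 1)
      = (∏ j : Fin (n+1), if 0 < x j then (X:Polynomial ℤ) ^ (x j - 1) else 1) *
        ∏ i, ∏ j, (if 0 < g i j then (X:Polynomial ℤ) ^ (g i j - 1) else 1) := by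
  rw [Fin.prod_univ_castSucc (f := fun i => ∏ j,
    if 0 < combine n x g i j then (X:Polynomial ℤ) ^ (combine n x g i j - 1) else 1)]
  have hrow : ∀ i : Fin (n+1),
      (∏ j, if 0 < combine n x g i.castSucc j then (X:Polynomial ℤ) ^ (combine n x g i.castSucc j - 1) else 1)
      = ∏ j, (if 0 < g i j then (X:Polynomial ℤ) ^ (g i j - 1) else 1) := by
    intro i
    rw [Fin.prod_univ_castSucc (f := fun j =>
      if 0 < combine n x g i.castSucc j then (X:Polynomial ℤ) ^ (combine n x g i.castSucc j - 1) else 1)]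
    simp only [combine_castSucc, combine_right_last]
    simp
  have hlast : (∏ j, if 0 < combine n x g (Fin.last (n+1)) j then (X:Polynomial ℤ) ^ (combine n x g (Fin.last (n+1)) j - 1) else 1)
      = ∏ j : Fin (n+1), (if 0 < x j then (X:Polynomial ℤ) ^ (x j - 1) else 1) := by
    rw [Fin.prod_univ_castSucc (f := fun j =>
      if 0 < combine n x g (Fin.last (n+1)) j then (X:Polynomial ℤ) ^ (combine n x g (Fin.last (n+1)) j - 1) else 1)]
    simp only [combine_last_castSucc, combine_right_last]
    simp
  rw [Finset.prod_congr rfl (fun i _ => hrow i), hlast]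
  ring

end ThresholdFlow

namespace ThresholdFlow
open Finset Polynomial

variable {n : ℕ} {G : SimpleGraph (Fin (n+2))} {a : Fin (n+2) → ℕ}

lemma last_ne_zero : (Fin.last (n+1)) ≠ (0 : Fin (n+2)) := by
  intro h
  have := congrArg Fin.val h
  simp at this

lemma threshold_comap (hG : IsThreshold (n+1) G) :
    IsThreshold n (G.comap (Fin.castSucc : Fin (n+1) → Fin (n+2))) := by
  intro i j i' j' hji hadj hii hjj hne
  exact hG _ _ _ _ (by simpa using hji) hadj (by simpa using hii) (by simpa using hjj)
    (fun h => hne (Fin.castSucc_injective _ h))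

lemma dbar_comap (i : Fin (n+1)) :
    dbar n (G.comap (Fin.castSucc : Fin (n+1) → Fin (n+2))) i = dbar (n+1) G i.castSucc := by
  have himg : (Fin.castSucc : Fin (n+1) → Fin (n+2)) ''
      {j : Fin (n+1) | j < i ∧ (G.comap (Fin.castSucc : Fin (n+1) → Fin (n+2))).Adj i j}
      = {j' : Fin (n+2) | j' < i.castSucc ∧ G.Adj i.castSucc j'} := by
    ext j'
    constructor
    · rintro ⟨j, ⟨hj1, hj2⟩, rfl⟩
      exact ⟨by simpa using hj1, hj2⟩
    · rintro ⟨h1, h2⟩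
      have hne : j' ≠ Fin.last (n+1) := by
        intro h
        subst h
        exact absurd (lt_of_lt_of_le h1 (Fin.le_last _)) (lt_irrefl _)
      obtain ⟨j, rfl⟩ := Fin.exists_castSucc_eq.mpr hne
      exact ⟨j, ⟨by simpa using h1, h2⟩, rfl⟩
  unfold dbar
  rw [← himg, Set.ncard_image_of_injective _ (Fin.castSucc_injective _)]

lemma combine_isFlow (hG : IsThreshold (n+1) G) {x : Fin (n+1) → ℕ}
    {g : Fin (n+1) → Fin (n+1) → ℕ}
    (hxsum : ∑ j, x j = a (Fin.last (n+1)))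
    (hxsupp : ∀ j : Fin (n+1), x j ≠ 0 → (j:ℕ) < dbar (n+1) G (Fin.last (n+1)))
    (hg : IsFlow n (G.comap (Fin.castSucc : Fin (n+1) → Fin (n+2)))
      (fun i => a i.castSucc + x i) g) :
    IsFlow (n+1) G a (combine n x g) := by
  constructor
  · intro i j hne
    unfold combine at hne
    split_ifs at hne with hj hi
    · exact absurd rfl hne
    · subst hi
      have hx := hxsupp _ hne
      have hjL : j < Fin.last (n+1) := (Fin.le_last j).lt_of_ne hj
      have hval : ((j.castPred hj : Fin (n+1)) : ℕ) = (j : ℕ) := by simp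
      rw [hval] at hx
      exact ⟨hjL, (adj_iff_lt_dbar hG hjL).mpr hx⟩
    · have h := hg.1 _ _ hne
      have hiL : i = (i.castPred hi).castSucc := (Fin.castSucc_castPred i hi).symm
      have hjL : j = (j.castPred hj).castSucc := (Fin.castSucc_castPred j hj).symm
      rw [hiL, hjL]
      exact ⟨by simpa using h.1, h.2⟩
  · intro i hi
    by_cases hiL : i = Fin.last (n+1)
    · subst hiL
      have hout : ∑ j, combine n x g (Fin.last (n+1)) j = a (Fin.last (n+1)) := by
        rw [Fin.sum_univ_castSucc (f := fun j => combine n x g (Fin.last (n+1)) j)]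
        simp only [combine_last_castSucc, combine_right_last, add_zero]
        exact hxsum
      have hin : ∑ j, combine n x g j (Fin.last (n+1)) = 0 :=
        Finset.sum_eq_zero fun j _ => combine_right_last x g j
      rw [hout, hin, add_zero]
    · set i₀ : Fin (n+1) := i.castPred hiL with hi₀
      have hics : i = i₀.castSucc := (Fin.castSucc_castPred i hiL).symm
      have hi₀0 : i₀ ≠ 0 := by
        intro h
        apply hi
        rw [hics, h]
        rfl
      have hcons := hg.2 i₀ hi₀0
      have hout : ∑ j, combine n x g i j = ∑ j, g i₀ j := by
        rw [hics, Fin.sum_univ_castSucc (f := fun j => combine n x g i₀.castSucc j)]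
        simp only [combine_castSucc, combine_right_last, add_zero]
      have hin : ∑ j, combine n x g j i = x i₀ + ∑ j, g j i₀ := by
        rw [hics, Fin.sum_univ_castSucc (f := fun j => combine n x g j i₀.castSucc)]
        simp only [combine_castSucc, combine_last_castSucc]
        omega
      rw [hout, hin, hcons, hics]
      simp only []
      omega

lemma flow_zero_into_last {f : Fin (n+2) → Fin (n+2) → ℕ} (hf : IsFlow (n+1) G a f)
    (j : Fin (n+2)) : f j (Fin.last (n+1)) = 0 := by
  by_contra h
  have := (hf.1 _ _ h).1
  exact absurd this (not_lt.mpr (Fin.le_last j))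

lemma xOf_sum {f : Fin (n+2) → Fin (n+2) → ℕ} (hf : IsFlow (n+1) G a f) :
    ∑ j : Fin (n+1), f (Fin.last (n+1)) j.castSucc = a (Fin.last (n+1)) := by
  have hcons := hf.2 (Fin.last (n+1)) last_ne_zero
  have hin : ∑ j, f j (Fin.last (n+1)) = 0 :=
    Finset.sum_eq_zero fun j _ => flow_zero_into_last hf j
  rw [hin, add_zero] at hcons
  rw [Fin.sum_univ_castSucc (f := fun j => f (Fin.last (n+1)) j)] at hcons
  rw [flow_zero_into_last hf, add_zero] at hcons
  exact hcons

lemma xOf_supp (hG : IsThreshold (n+1) G) {f : Fin (n+2) → Fin (n+2) → ℕ}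
    (hf : IsFlow (n+1) G a f) (j : Fin (n+1)) (h : f (Fin.last (n+1)) j.castSucc ≠ 0) :
    (j : ℕ) < dbar (n+1) G (Fin.last (n+1)) := by
  obtain ⟨hlt, hadj⟩ := hf.1 _ _ h
  have := (adj_iff_lt_dbar hG hlt).mp hadj
  simpa using this

lemma gOf_isFlow {f : Fin (n+2) → Fin (n+2) → ℕ} (hf : IsFlow (n+1) G a f) :
    IsFlow n (G.comap (Fin.castSucc : Fin (n+1) → Fin (n+2)))
      (fun i => a i.castSucc + f (Fin.last (n+1)) i.castSucc)
      (fun i j => f i.castSucc j.castSucc) := by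
  constructor
  · intro i j h
    obtain ⟨h1, h2⟩ := hf.1 _ _ h
    exact ⟨by simpa using h1, h2⟩
  · intro i hi
    have hics : (i.castSucc : Fin (n+2)) ≠ 0 := by
      intro h
      apply hi
      have : (i.castSucc : Fin (n+2)) = (0 : Fin (n+1)).castSucc := h
      exact Fin.castSucc_injective _ this
    have hcons := hf.2 i.castSucc hics
    rw [Fin.sum_univ_castSucc (f := fun j => f i.castSucc j)] at hcons
    rw [flow_zero_into_last hf, add_zero] at hcons
    rw [Fin.sum_univ_castSucc (f := fun j => f j i.castSucc)] at hcons
    show ∑ j : Fin (n+1), f i.castSucc j.castSucc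
      = a i.castSucc + f (Fin.last (n+1)) i.castSucc + ∑ j : Fin (n+1), f j.castSucc i.castSucc
    omega

lemma combine_eq_self {f : Fin (n+2) → Fin (n+2) → ℕ} (hf : IsFlow (n+1) G a f) :
    combine n (fun j => f (Fin.last (n+1)) j.castSucc)
      (fun i j => f i.castSucc j.castSucc) = f := by
  funext i j
  unfold combine
  split_ifs with hj hi
  · subst hj
    exact (flow_zero_into_last hf i).symm
  · subst hi
    show f (Fin.last (n+1)) ((j.castPred hj).castSucc) = f (Fin.last (n+1)) j
    rw [Fin.castSucc_castPred]
  · show f ((i.castPred hi).castSucc) ((j.castPred hj).castSucc) = f i j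
    rw [Fin.castSucc_castPred, Fin.castSucc_castPred]

end ThresholdFlow

namespace ThresholdFlow
open Finset Polynomial

lemma Ehr0_eq_sum (n : ℕ) (G : SimpleGraph (Fin (n+1))) (a : Fin (n+1) → ℕ) :
    Ehr0 n G a = ∑ f ∈ (flows_finite n G a).toFinset,
      (X - 1) ^ (posCount n f - n) * ∏ i, ∏ j, if 0 < f i j then (X:Polynomial ℤ) ^ (f i j - 1) else 1 :=
  finsum_mem_eq_finite_toFinset_sum _ (flows_finite n G a)

lemma one_le_card_pos {m : ℕ} (x : Fin m → ℕ) (h : ∑ j, x j ≠ 0) :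
    1 ≤ (Finset.univ.filter fun j => 0 < x j).card := by
  rw [Nat.one_le_iff_ne_zero, Ne, Finset.card_eq_zero]
  intro hcard
  apply h
  apply Finset.sum_eq_zero
  intro j _
  by_contra hj
  have : j ∈ Finset.univ.filter fun j => 0 < x j :=
    Finset.mem_filter.mpr ⟨Finset.mem_univ _, Nat.pos_of_ne_zero hj⟩
  rw [hcard] at this
  exact absurd this (Finset.notMem_empty _)

theorem main : ∀ (n : ℕ) (G : SimpleGraph (Fin (n+1))), IsThreshold n G →
    ∀ a : Fin (n+1) → ℕ, (∀ i : Fin (n+1), i ≠ 0 → 0 < a i) →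
    Ehr0 n G a = ∏ i ∈ Finset.univ.erase (0 : Fin (n+1)),
      (X : Polynomial ℤ) ^ (dbar n G i * (a i - 1)) * qnat (dbar n G i) := by
  intro n
  induction n with
  | zero =>
    intro G hG a ha
    have hflow : {f : Fin 1 → Fin 1 → ℕ | IsFlow 0 G a f} = {(fun _ _ => 0)} := by
      ext f
      simp only [Set.mem_setOf_eq, Set.mem_singleton_iff]
      constructor
      · intro hf
        funext i j
        by_contra h
        have := (hf.1 i j h).1
        exact absurd this (by omega)
      · rintro rfl
        refine ⟨fun i j h => absurd rfl h, fun i hi => absurd ?_ hi⟩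
        omega
    rw [Ehr0, hflow, finsum_mem_singleton]
    have h1 : posCount 0 (fun _ _ => (0:ℕ)) = 0 := by
      simp [posCount]
    rw [h1]
    have h2 : (Finset.univ.erase (0 : Fin 1)) = ∅ := by decide
    rw [h2]
    simp
  | succ n ih =>
    intro G hG a ha
    classical
    have hL0 : (Fin.last (n+1)) ≠ (0 : Fin (n+2)) := last_ne_zero
    set d : ℕ := dbar (n+1) G (Fin.last (n+1)) with hd
    rcases Nat.eq_zero_or_pos d with hd0 | hd1
    · -- no flows at all
      have hempty : {f | IsFlow (n+1) G a f} = ∅ := by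
        ext f
        simp only [Set.mem_setOf_eq, Set.mem_empty_iff_false, iff_false]
        intro hf
        have hsum := xOf_sum hf
        have hposa : 0 < a (Fin.last (n+1)) := ha _ hL0
        have hex : ∃ j : Fin (n+1), f (Fin.last (n+1)) j.castSucc ≠ 0 := by
          by_contra h
          push_neg at h
          rw [Finset.sum_eq_zero (fun j _ => h j)] at hsum
          omega
        obtain ⟨j, hj⟩ := hex
        have := xOf_supp hG hf j hj
        omega
      rw [Ehr0, hempty, finsum_mem_empty]
      symm
      apply Finset.prod_eq_zero (Finset.mem_erase.mpr ⟨hL0, Finset.mem_univ _⟩)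
      rw [← hd, hd0]
      simp [qnat]
    · -- main case
      have hdle : d ≤ n+1 := by
        have := dbar_le G (Fin.last (n+1))
        rw [← hd] at this
        simpa using this
      set G' := G.comap (Fin.castSucc : Fin (n+1) → Fin (n+2)) with hG'def
      have hG' : IsThreshold n G' := threshold_comap hG
      set A := a (Fin.last (n+1)) with hA
      have hA1 : 1 ≤ A := ha _ hL0
      set a' : (Fin (n+1) → ℕ) → Fin (n+1) → ℕ := fun x i => a i.castSucc + x i with ha'def
      have hcs0 : ∀ i : Fin (n+1), i ≠ 0 → (i.castSucc : Fin (n+2)) ≠ 0 := by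
        intro i hi h
        apply hi
        have : (i.castSucc : Fin (n+2)) = (0 : Fin (n+1)).castSucc := h
        exact Fin.castSucc_injective _ this
      have ha' : ∀ x, ∀ i : Fin (n+1), i ≠ 0 → 0 < a' x i := by
        intro x i hi
        have := ha i.castSucc (hcs0 i hi)
        simp only [ha'def]
        omega
      set Xfin : Finset (Fin (n+1) → ℕ) :=
        (Finset.Nat.antidiagonalTuple (n+1) A).filter
          (fun x => ∀ j : Fin (n+1), x j ≠ 0 → (j:ℕ) < d) with hXfin
      set Cfix : Polynomial ℤ := ∏ i ∈ Finset.univ.erase (0 : Fin (n+1)),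
        (X:Polynomial ℤ) ^ (dbar n G' i * (a i.castSucc - 1)) * qnat (dbar n G' i) with hCfix
      rw [Ehr0_eq_sum]
      -- the bijection with the sigma set
      have hbij : ∑ f ∈ (flows_finite (n+1) G a).toFinset,
            (X - 1) ^ (posCount (n+1) f - (n+1)) *
              ∏ i, ∏ j, (if 0 < f i j then (X:Polynomial ℤ) ^ (f i j - 1) else 1)
          = ∑ q ∈ Xfin.sigma (fun x => (flows_finite n G' (a' x)).toFinset),
            (X - 1) ^ (posCount (n+1) (combine n q.1 q.2) - (n+1)) *
              ∏ i, ∏ j, (if 0 < combine n q.1 q.2 i j then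
                (X:Polynomial ℤ) ^ (combine n q.1 q.2 i j - 1) else 1) := by
        refine Finset.sum_bij'
          (fun f _ => (⟨fun j => f (Fin.last (n+1)) j.castSucc,
            fun i j => f i.castSucc j.castSucc⟩ : (_ : Fin (n+1) → ℕ) × (Fin (n+1) → Fin (n+1) → ℕ)))
          (fun q _ => combine n q.1 q.2) ?_ ?_ ?_ ?_ ?_
        · intro f hf
          rw [Set.Finite.mem_toFinset, Set.mem_setOf_eq] at hf
          refine Finset.mem_sigma.mpr ⟨?_, ?_⟩
          · rw [hXfin, Finset.mem_filter, Finset.Nat.mem_antidiagonalTuple]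
            exact ⟨xOf_sum hf, fun j hj => xOf_supp hG hf j hj⟩
          · rw [Set.Finite.mem_toFinset, Set.mem_setOf_eq]
            exact gOf_isFlow hf
        · intro q hq
          rw [Finset.mem_sigma] at hq
          obtain ⟨hq1, hq2⟩ := hq
          rw [hXfin, Finset.mem_filter, Finset.Nat.mem_antidiagonalTuple] at hq1
          rw [Set.Finite.mem_toFinset, Set.mem_setOf_eq] at hq2
          rw [Set.Finite.mem_toFinset, Set.mem_setOf_eq]
          exact combine_isFlow hG hq1.1 hq1.2 hq2
        · intro f hf
          rw [Set.Finite.mem_toFinset, Set.mem_setOf_eq] at hf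
          exact combine_eq_self hf
        · intro q hq
          refine Sigma.ext ?_ (heq_of_eq ?_)
          · funext j
            exact combine_last_castSucc q.1 q.2 j
          · funext i j
            exact combine_castSucc q.1 q.2 i j
        · intro f hf
          rw [Set.Finite.mem_toFinset, Set.mem_setOf_eq] at hf
          rw [combine_eq_self hf]
      rw [hbij, Finset.sum_sigma]
      -- evaluate the inner sum for each x
      have hinner : ∀ x ∈ Xfin,
          (∑ g ∈ (flows_finite n G' (a' x)).toFinset,
            (X - 1) ^ (posCount (n+1) (combine n x g) - (n+1)) *
              ∏ i, ∏ j, (if 0 < combine n x g i j then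
                (X:Polynomial ℤ) ^ (combine n x g i j - 1) else 1))
          = ((X - 1) ^ ((Finset.univ.filter fun j : Fin (n+1) => 0 < x j).card - 1) *
              ∏ j : Fin (n+1), (if 0 < x j then
                (X:Polynomial ℤ) ^ (x j - 1 + (j:ℕ) * x j) else 1)) * Cfix := by
        intro x hx
        rw [hXfin, Finset.mem_filter, Finset.Nat.mem_antidiagonalTuple] at hx
        have hsx1 : 1 ≤ (Finset.univ.filter fun j : Fin (n+1) => 0 < x j).card :=
          one_le_card_pos x (by rw [hx.1]; omega)
        have hstep : ∀ g ∈ (flows_finite n G' (a' x)).toFinset,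
            (X - 1) ^ (posCount (n+1) (combine n x g) - (n+1)) *
              ∏ i, ∏ j, (if 0 < combine n x g i j then
                (X:Polynomial ℤ) ^ (combine n x g i j - 1) else 1)
            = ((X - 1) ^ ((Finset.univ.filter fun j : Fin (n+1) => 0 < x j).card - 1) *
                ∏ j : Fin (n+1), (if 0 < x j then (X:Polynomial ℤ) ^ (x j - 1) else 1)) *
              ((X - 1) ^ (posCount n g - n) *
                ∏ i, ∏ j, (if 0 < g i j then (X:Polynomial ℤ) ^ (g i j - 1) else 1)) := by
          intro g hg
          rw [Set.Finite.mem_toFinset, Set.mem_setOf_eq] at hg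
          have hpg : n ≤ posCount n g := posCount_ge hg (ha' x)
          rw [posCount_combine, prodW_combine]
          have hexp : (Finset.univ.filter fun j : Fin (n+1) => 0 < x j).card + posCount n g - (n+1)
              = ((Finset.univ.filter fun j : Fin (n+1) => 0 < x j).card - 1) + (posCount n g - n) := by
            omega
          rw [hexp, pow_add]
          ring
        rw [Finset.sum_congr rfl hstep, ← Finset.mul_sum, ← Ehr0_eq_sum,
          ih G' hG' (a' x) (ha' x)]
        -- now split the product from the induction hypothesis
        have hsplit : ∏ i ∈ Finset.univ.erase (0 : Fin (n+1)),
              (X:Polynomial ℤ) ^ (dbar n G' i * (a' x i - 1)) * qnat (dbar n G' i)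
            = Cfix * ∏ i ∈ Finset.univ.erase (0 : Fin (n+1)),
                (X:Polynomial ℤ) ^ ((i:ℕ) * x i) := by
          rw [hCfix, ← Finset.prod_mul_distrib]
          apply Finset.prod_congr rfl
          intro i hi
          have hi0 : i ≠ 0 := Finset.ne_of_mem_erase hi
          have hai : 1 ≤ a i.castSucc := ha i.castSucc (hcs0 i hi0)
          have hexp2 : dbar n G' i * (a' x i - 1)
              = dbar n G' i * (a i.castSucc - 1) + dbar n G' i * x i := by
            rw [ha'def]
            simp only []
            rw [← Nat.mul_add]
            congr 1
            omega
          rw [hexp2, pow_add]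
          have hdb : (X:Polynomial ℤ) ^ (dbar n G' i * x i) = X ^ ((i:ℕ) * x i) := by
            rcases Nat.eq_zero_or_pos (x i) with h | h
            · rw [h]; simp
            · have hxi : (i:ℕ) < d := hx.2 i (by omega)
              have hicsL : (i.castSucc : Fin (n+2)) < Fin.last (n+1) := Fin.castSucc_lt_last i
              have hadj : G.Adj (Fin.last (n+1)) i.castSucc := by
                rw [adj_iff_lt_dbar hG hicsL, ← hd]
                simpa using hxi
              have := dbar_eq_of_adj hG hicsL hadj
              rw [dbar_comap, this]
              simp
          rw [hdb]
          ring
        rw [hsplit]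
        have herase : ∏ i ∈ Finset.univ.erase (0 : Fin (n+1)),
            (X:Polynomial ℤ) ^ ((i:ℕ) * x i) = ∏ i : Fin (n+1), (X:Polynomial ℤ) ^ ((i:ℕ) * x i) := by
          apply Finset.prod_erase
          simp
        rw [herase]
        have hcomb : (∏ j : Fin (n+1), (if 0 < x j then (X:Polynomial ℤ) ^ (x j - 1) else 1)) *
              ∏ i : Fin (n+1), (X:Polynomial ℤ) ^ ((i:ℕ) * x i)
            = ∏ j : Fin (n+1), (if 0 < x j then
                (X:Polynomial ℤ) ^ (x j - 1 + (j:ℕ) * x j) else 1) := by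
          rw [← Finset.prod_mul_distrib]
          apply Finset.prod_congr rfl
          intro j _
          rcases Nat.eq_zero_or_pos (x j) with h | h
          · rw [h]; simp
          · rw [if_pos h, if_pos h, pow_add]
        rw [← hcomb]
        ring
      rw [Finset.sum_congr rfl hinner, ← Finset.sum_mul]
      have hFcore : ∑ x ∈ Xfin,
          (X - 1) ^ ((Finset.univ.filter fun j : Fin (n+1) => 0 < x j).card - 1) *
            ∏ j : Fin (n+1), (if 0 < x j then
              (X:Polynomial ℤ) ^ (x j - 1 + (j:ℕ) * x j) else 1)
          = X ^ (d*(A-1)) * qnat d := by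
        rw [hXfin]
        exact Fcore (n+1) d A hd1 hdle hA1
      rw [hFcore]
      -- now compute the right-hand side
      have hRHS : ∏ i ∈ Finset.univ.erase (0 : Fin (n+2)),
            (X : Polynomial ℤ) ^ (dbar (n+1) G i * (a i - 1)) * qnat (dbar (n+1) G i)
          = Cfix * (X ^ (d*(A-1)) * qnat d) := by
        rw [← Finset.filter_ne', Finset.prod_filter]
        rw [Fin.prod_univ_castSucc (f := fun i : Fin (n+2) => if i ≠ 0 then
          (X : Polynomial ℤ) ^ (dbar (n+1) G i * (a i - 1)) * qnat (dbar (n+1) G i) else 1)]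
        have hlast' : (if (Fin.last (n+1) : Fin (n+2)) ≠ 0 then
            (X : Polynomial ℤ) ^ (dbar (n+1) G (Fin.last (n+1)) * (a (Fin.last (n+1)) - 1)) *
              qnat (dbar (n+1) G (Fin.last (n+1))) else 1)
            = X ^ (d*(A-1)) * qnat d := by
          rw [if_pos hL0, ← hd, ← hA]
        rw [hlast']
        congr 1
        rw [hCfix, ← Finset.filter_ne', Finset.prod_filter]
        apply Finset.prod_congr rfl
        intro i _
        by_cases hi : i = 0
        · subst hi
          rw [if_neg (by simp), if_neg (by simp)]
        · rw [if_pos hi, if_pos (hcs0 i hi), dbar_comap]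
      rw [hRHS]
      ring

theorem ehr_q0_eq_prod (n : ℕ) (hn : 1 ≤ n) (G : SimpleGraph (Fin (n+1)))
    (hG : IsThreshold n G) (a : Fin (n+1) → ℕ)
    (ha : ∀ i : Fin (n+1), i ≠ 0 → 0 < a i) :
    Ehr0 n G a =
      ∏ i ∈ Finset.univ.erase (0 : Fin (n+1)),
        (X : Polynomial ℤ) ^ (dbar n G i * (a i - 1)) * qnat (dbar n G i) :=
  main n G hG a ha

end ThresholdFlow
end
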